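/- The greedy rule f_U — which, given profile P, repeatedly deletes all minimum-weight edges from G(P) until a topological sort exists, and outputs such a sort — maximizes σ_U pointwise: for every voting rule g and every profile P, σ_U(f_U, P) ≥ σ_U(g, P). -/

import Mathlib

/-!
For voters without contradictory preferences, the alignment of a pair ranked `A` above `B`
is `(n + margin A B) / (2n)`, so `M(f, P)` is governed by the largest margin of an edge of
`G(P)` that `f P` reverses. The greedy ranking reverses no edge of margin above the greedy
threshold `t`, whence `M(f_U, P) ≥ (n - t) / (2n)`. Conversely, if `t > 0`, every strict order
reverses an edge of margin at least `t`: otherwise all reversed edges have margin at most some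
`w < t`, so the edges of margin above `w` are all respected by the order and form an acyclic
graph, contradicting the minimality of `t`. Since `σ_U` is monotone in `M`, this suffices.
-/


open scoped Classical

noncomputable section

/-- Relative ranking entry of voter `i` on the pair `(A,B)`. -/
def Xrel {V C : Type*} (P : V → C → C → Prop) (A B : C) (i : V) : ℝ :=
  if P i A B then 1 else if P i B A then 0 else 1/2

/-- The signed margin `(X_{A,B}(P) − X_{B,A}(P)) · 1` by which voters prefer `A` to `B`.
The pairwise comparison graph `G(P)` has an edge from `A` to `B` exactly when this is positive. -/
def margin {V C : Type*} [Fintype V] (P : V → C → C → Prop) (A B : C) : ℝ :=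
  ∑ i, (Xrel P A B i - Xrel P B A i)

/-- The alignment `I_{A,B}(f,P)`. -/
def align {V C : Type*} [Fintype V] (f : (V → C → C → Prop) → C → C → Prop)
    (P : V → C → C → Prop) (A B : C) : ℝ :=
  if f P A B then (∑ i, Xrel P A B i) / (Fintype.card V)
  else (∑ i, Xrel P B A i) / (Fintype.card V)

/-- The misalignment score `M(f,P)`: the minimum alignment over pairs of candidates. -/
def Mmin {V C : Type*} [Fintype V] (f : (V → C → C → Prop) → C → C → Prop)
    (P : V → C → C → Prop) : ℝ :=
  sInf {x : ℝ | ∃ A B : C, A ≠ B ∧ x = align f P A B}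

/-- `σ_U(f,P) = M/(1−M)` if `M(f,P) < 1/2`, and `1` otherwise. -/
def sigmaU {V C : Type*} [Fintype V] (f : (V → C → C → Prop) → C → C → Prop)
    (P : V → C → C → Prop) : ℝ :=
  if Mmin f P < 1/2 then Mmin f P / (1 - Mmin f P) else 1

/-- A directed graph (given as a relation) has a directed cycle. -/
def HasCycle {C : Type*} (e : C → C → Prop) : Prop :=
  ∃ (A : C) (l : List C), List.Chain e A (l ++ [A])

/-- The weight threshold reached by the greedy algorithm on `G(P)`: repeatedly deleting all
minimum-weight edges until a topological sort exists leaves exactly the edges of weight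
greater than `greedyThreshold P`, the least `w ≥ 0` for which the subgraph of edges of margin
greater than `w` is acyclic. -/
def greedyThreshold {V C : Type*} [Fintype V] (P : V → C → C → Prop) : ℝ :=
  sInf {w : ℝ | 0 ≤ w ∧ ¬ HasCycle (fun A B : C => w < margin P A B)}

section

variable {V C : Type*}

lemma HasCycle.exists_not_rel {e r : C → C → Prop} [IsStrictOrder C r] (h : HasCycle e) :
    ∃ a b, e a b ∧ ¬ r a b := by
  by_contra! hsub
  obtain ⟨a, l, hl⟩ := h
  have hr : (a :: (l ++ [a])).Pairwise r := (List.IsChain.imp hsub hl).pairwise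
  exact irrefl a (List.rel_of_pairwise_cons hr (by simp))

lemma Xrel_nonneg (P : V → C → C → Prop) (A B : C) (i : V) : 0 ≤ Xrel P A B i := by
  unfold Xrel; split_ifs <;> norm_num

lemma Xrel_add_Xrel_swap {P : V → C → C → Prop} {A B : C} {i : V}
    (hP : ¬ (P i A B ∧ P i B A)) : Xrel P A B i + Xrel P B A i = 1 := by
  unfold Xrel; split_ifs <;> first | exact absurd ⟨‹_›, ‹_›⟩ hP | norm_num

section Margin

variable [Fintype V] (P : V → C → C → Prop)

lemma margin_swap (A B : C) : margin P B A = -margin P A B := by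
  simp only [margin, ← Finset.sum_neg_distrib, neg_sub]

lemma margin_self (A : C) : margin P A A = 0 := by
  simp [margin]

variable {P}

lemma sum_Xrel_eq (hP : ∀ i A B, ¬ (P i A B ∧ P i B A)) (A B : C) :
    ∑ i, Xrel P A B i = (Fintype.card V + margin P A B) / 2 := by
  have hsum : ∑ i, Xrel P A B i + ∑ i, Xrel P B A i = Fintype.card V := by
    simp [← Finset.sum_add_distrib, Xrel_add_Xrel_swap (hP _ A B)]
  have hdiff : margin P A B = ∑ i, Xrel P A B i - ∑ i, Xrel P B A i :=
    Finset.sum_sub_distrib ..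
  linarith

end Margin

section Alignment

variable [Fintype V] {f : (V → C → C → Prop) → C → C → Prop} {P : V → C → C → Prop}

lemma align_nonneg (A B : C) : 0 ≤ align f P A B := by
  unfold align
  split_ifs <;> exact div_nonneg (Finset.sum_nonneg fun i _ => Xrel_nonneg P _ _ i) (by positivity)

lemma align_of_rel (hP : ∀ i A B, ¬ (P i A B ∧ P i B A)) {A B : C} (h : f P A B) :
    align f P A B = (Fintype.card V + margin P A B) / (2 * Fintype.card V) := by
  rw [align, if_pos h, sum_Xrel_eq hP, div_div]

lemma align_of_not_rel (hP : ∀ i A B, ¬ (P i A B ∧ P i B A)) {A B : C} (h : ¬ f P A B) :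
    align f P A B = (Fintype.card V - margin P A B) / (2 * Fintype.card V) := by
  rw [align, if_neg h, sum_Xrel_eq hP, div_div, margin_swap P A B, sub_eq_add_neg]

lemma Mmin_le_align {A B : C} (hAB : A ≠ B) : Mmin f P ≤ align f P A B :=
  csInf_le ⟨0, fun _ ⟨_, _, _, hx⟩ => hx ▸ align_nonneg _ _⟩ ⟨A, B, hAB, rfl⟩

lemma le_Mmin [Nontrivial C] {c : ℝ} (h : ∀ A B : C, A ≠ B → c ≤ align f P A B) :
    c ≤ Mmin f P := by
  obtain ⟨A, B, hAB⟩ := exists_pair_ne C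
  exact le_csInf ⟨_, A, B, hAB, rfl⟩ fun _ ⟨A, B, hAB, hx⟩ => hx ▸ h A B hAB

end Alignment

lemma sigmaU_le_sigmaU [Fintype V] {f g : (V → C → C → Prop) → C → C → Prop}
    {P : V → C → C → Prop} (h : Mmin f P < 1 / 2 → Mmin g P ≤ Mmin f P) :
    sigmaU g P ≤ sigmaU f P := by
  unfold sigmaU
  by_cases hf : Mmin f P < 1 / 2
  · have hgf := h hf
    rw [if_pos hf, if_pos (hgf.trans_lt hf), div_le_div_iff₀ (by linarith) (by linarith)]
    nlinarith
  · rw [if_neg hf]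
    split_ifs with hg
    · rw [div_le_one (by linarith)]; linarith
    · exact le_rfl

lemma le_Mmin_of_forall_lt_margin [Fintype V] [Nontrivial C]
    {f : (V → C → C → Prop) → C → C → Prop} {P : V → C → C → Prop} {t : ℝ}
    (hn : 0 < Fintype.card V) (hP : ∀ i A B, ¬ (P i A B ∧ P i B A))
    [IsStrictTotalOrder C (f P)] (hf : ∀ A B, t < margin P A B → f P A B) :
    (Fintype.card V - t) / (2 * Fintype.card V) ≤ Mmin f P := by
  have hback (A B : C) (h : f P A B) : margin P B A ≤ t :=
    not_lt.1 fun hlt => asymm h (hf B A hlt)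
  have hn' : (0 : ℝ) < 2 * Fintype.card V := by positivity
  refine le_Mmin fun A B hAB => ?_
  by_cases h : f P A B
  · rw [align_of_rel hP h]
    have := hback A B h
    rw [margin_swap] at this
    gcongr
    linarith
  · have hBA : f P B A := ((trichotomous_of (f P) A B).resolve_left h).resolve_left hAB
    rw [align_of_not_rel hP h]
    gcongr
    exact hback B A hBA

lemma exists_not_rel_greedyThreshold_le_margin [Fintype V] [Fintype C] {P : V → C → C → Prop}
    {r : C → C → Prop} [IsStrictOrder C r] (ht : 0 < greedyThreshold P) :
    ∃ A B, ¬ r A B ∧ greedyThreshold P ≤ margin P A B := by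
  by_contra! hlt
  let S : Finset ℝ := insert 0 <|
    (Finset.univ.filter fun p : C × C => ¬ r p.1 p.2).image fun p => margin P p.1 p.2
  set w := S.max' (Finset.insert_nonempty _ _)
  have hw_lt : w < greedyThreshold P := by
    refine (S.max'_lt_iff _).2 fun x hx => ?_
    simp only [S, Finset.mem_insert, Finset.mem_image, Finset.mem_filter] at hx
    rcases hx with rfl | ⟨⟨A, B⟩, ⟨-, hAB⟩, rfl⟩
    exacts [ht, hlt A B hAB]
  have hle_w (A B : C) (h : ¬ r A B) : margin P A B ≤ w :=
    S.le_max' _ (Finset.mem_insert_of_mem (Finset.mem_image.2 ⟨(A, B), by simpa using h, rfl⟩))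
  have hacyclic : ¬ HasCycle fun A B => w < margin P A B := fun hc => by
    obtain ⟨A, B, hw, hr⟩ := hc.exists_not_rel (r := r)
    exact (hle_w A B hr).not_gt hw
  have : greedyThreshold P ≤ w :=
    csInf_le ⟨0, fun _ h => h.1⟩ ⟨S.le_max' 0 (Finset.mem_insert_self _ _), hacyclic⟩
  exact this.not_gt hw_lt

end

/-- The greedy rule `f_U` — outputting a topological sort of what remains of `G(P)` after
repeatedly deleting all minimum-weight edges until a topological sort exists (equivalently, a
complete ranking respecting every edge of margin above the greedy threshold) — maximizes
`σ_U` pointwise: for every voting rule `g` and every profile `P`,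
`σ_U(f_U,P) ≥ σ_U(g,P)`. -/
theorem stmt15 {V C : Type*} [Fintype V] [Fintype C]
    (hn : 0 < Fintype.card V) (hC : 2 ≤ Fintype.card C)
    (fU : (V → C → C → Prop) → C → C → Prop)
    (hfU : ∀ P : V → C → C → Prop, IsStrictTotalOrder C (fU P) ∧
      ∀ A B : C, greedyThreshold P < margin P A B → fU P A B) :
    ∀ (g : (V → C → C → Prop) → C → C → Prop) (P : V → C → C → Prop),
      (∀ i A B, ¬ (P i A B ∧ P i B A)) → IsStrictTotalOrder C (g P) →
      sigmaU g P ≤ sigmaU fU P := by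
  intro g P hP hg
  have : Nontrivial C := Fintype.one_lt_card_iff_nontrivial.1 hC
  have := (hfU P).1
  set n : ℝ := (Fintype.card V : ℝ)
  set t := greedyThreshold P
  have hfU_bound : (n - t) / (2 * n) ≤ Mmin fU P := le_Mmin_of_forall_lt_margin hn hP (hfU P).2
  have hn' : 0 < 2 * n := by positivity
  refine sigmaU_le_sigmaU fun hlt => ?_
  have ht : 0 < t := by
    by_contra! ht
    have : 1 / 2 ≤ (n - t) / (2 * n) := by rw [le_div_iff₀ hn']; linarith
    linarith
  obtain ⟨A, B, hAB, htAB⟩ := exists_not_rel_greedyThreshold_le_margin (r := g P) ht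
  have hne : A ≠ B := by rintro rfl; rw [margin_self] at htAB; linarith
  calc Mmin g P ≤ align g P A B := Mmin_le_align hne
    _ = (n - margin P A B) / (2 * n) := align_of_not_rel hP hAB
    _ ≤ (n - t) / (2 * n) := by gcongr
    _ ≤ Mmin fU P := hfU_bound
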